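/- Every graph null player in a communication situation (N, v, Γ) is a null player in the graph-restricted game (N, v^Γ): if i is a graph null player, then v^Γ(S ∪ {i}) = v^Γ(S) for all S ⊆ N∖{i}. -/

import Mathlib

open Finset

noncomputable section
open scoped Classical

namespace TUGame

variable {ι : Type*} [Fintype ι] [DecidableEq ι]

/-- Harsanyi dividend of coalition `T` in game `v`. -/
def dividend (v : Finset ι → ℝ) (T : Finset ι) : ℝ :=
  ∑ R ∈ T.powerset, (-1 : ℝ) ^ (T.card - R.card) * v R

/-- Unanimity game of coalition `T`. -/
def unanimity (T S : Finset ι) : ℝ := if T ⊆ S then 1 else 0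

/-- Shapley value of player `i` in game `v`. -/
def shapley (v : Finset ι → ℝ) (i : ι) : ℝ :=
  ∑ S ∈ Finset.univ.powerset.filter (fun S => i ∈ S),
    (((S.card - 1).factorial * (Fintype.card ι - S.card).factorial : ℕ) : ℝ) /
      (((Fintype.card ι).factorial : ℕ) : ℝ) * (v S - v (S.erase i))

/-- Shapley interaction index, defined via discrete derivatives. -/
def SIderiv (v : Finset ι → ℝ) (S : Finset ι) : ℝ :=
  ∑ T ∈ (Finset.univ \ S).powerset,
    (((Fintype.card ι - T.card - S.card).factorial * T.card.factorial : ℕ) : ℝ) /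
      (((Fintype.card ι - S.card + 1).factorial : ℕ) : ℝ) *
    ∑ L ∈ S.powerset, (-1 : ℝ) ^ (S.card - L.card) * v (T ∪ L)

/-- Shapley interaction index, expressed via Harsanyi dividends. -/
def SIdiv (v : Finset ι → ℝ) (S : Finset ι) : ℝ :=
  ∑ T ∈ Finset.univ.powerset.filter (fun T => S ⊆ T),
    dividend v T / ((T.card - S.card + 1 : ℕ) : ℝ)

/-- The subgraph of `G` induced by the coalition `S` (as a graph on the same vertex set). -/
def restrict (G : SimpleGraph ι) (S : Finset ι) : SimpleGraph ι where
  Adj i j := G.Adj i j ∧ i ∈ S ∧ j ∈ S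
  symm := ⟨fun i j h => ⟨h.1.symm, h.2.2, h.2.1⟩⟩
  loopless := ⟨fun i h => G.loopless.irrefl i h.1⟩

/-- Connected component of `i` in the subgraph induced by `S`. -/
def comp (G : SimpleGraph ι) (S : Finset ι) (i : ι) : Finset ι :=
  S.filter fun j => (restrict G S).Reachable i j

/-- Connected component of `i` in `G`. -/
def component (G : SimpleGraph ι) (i : ι) : Finset ι := comp G Finset.univ i

/-- Myerson graph-restricted game: sum of `v` over the connected components
of the subgraph induced by `S`. -/
def restrictedGame (G : SimpleGraph ι) (v : Finset ι → ℝ) (S : Finset ι) : ℝ :=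
  ∑ C ∈ S.image (comp G S), v C

/-- Myerson interaction index. -/
def MI (G : SimpleGraph ι) (v : Finset ι → ℝ) (S : Finset ι) : ℝ :=
  SIdiv (restrictedGame G v) S

/-- The subgraph induced by `S` is connected. -/
def ConnectedOn (G : SimpleGraph ι) (S : Finset ι) : Prop :=
  ∀ i ∈ S, ∀ j ∈ S, (restrict G S).Reachable i j

/-- `R` is a minimal `T`-connecting set of nodes in `G`. -/
def MinimalConnecting (G : SimpleGraph ι) (T R : Finset ι) : Prop :=
  T ⊆ R ∧ ConnectedOn G R ∧ ∀ R' ⊂ R, ¬ (T ⊆ R' ∧ ConnectedOn G R')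

/-- `i` is an intermediary of `T` in `G`. -/
def Intermediary (G : SimpleGraph ι) (T : Finset ι) (i : ι) : Prop :=
  ∃ R, MinimalConnecting G T R ∧ i ∈ R ∧ i ∉ T

/-- `i` is an essential intermediary of `T` in `G`. -/
def EssentialIntermediary (G : SimpleGraph ι) (T : Finset ι) (i : ι) : Prop :=
  i ∉ T ∧ ∀ R, MinimalConnecting G T R → i ∈ R

/-- `i` is a null player in game `v`. -/
def NullPlayer (v : Finset ι → ℝ) (i : ι) : Prop :=
  ∀ S : Finset ι, i ∉ S → v (insert i S) = v S

/-- `i` is a graph null player in the communication situation `(N, v, G)`. -/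
def GraphNull (G : SimpleGraph ι) (v : Finset ι → ℝ) (i : ι) : Prop :=
  NullPlayer v i ∧
    ∀ j k : ι, j ≠ k → j ≠ i → k ≠ i → Intermediary G {j, k} i →
      NullPlayer v j ∨ NullPlayer v k

/-- `P` is a veto partnership in game `v`. -/
def VetoPartnership (v : Finset ι → ℝ) (P : Finset ι) : Prop :=
  P.Nonempty ∧ ∀ T : Finset ι, T ⊆ Finset.univ \ P →
    v T = 0 ∧ ∀ S ⊂ P, v (T ∪ S) = 0

/-- `GP` is a veto graph partnership in `(N, v, G)`. -/
def VetoGraphPartnership (G : SimpleGraph ι) (v : Finset ι → ℝ) (GP : Finset ι) : Prop :=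
  GP.Nonempty ∧ ∃ P, VetoPartnership v P ∧
    ∀ i ∈ GP, i ∈ P ∨ EssentialIntermediary G P i

/-- Cutnodes of `S`: nodes of `S` whose removal disconnects the induced subgraph on `S`. -/
def cutnodes (G : SimpleGraph ι) (S : Finset ι) : Finset ι :=
  S.filter fun i => ¬ ConnectedOn G (S.erase i)

end TUGame

open TUGame

/-!
Adding `i` to `S` merges the components of `S` adjacent to `i` into the single component `C` of
`i`, and leaves the other components unchanged. Two players lying in different merged components
are connected through `C` but not within `S`, so `i` is an intermediary of them, and one of the
two is a null player. Hence at most one merged component contains non-null players; since `i`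
itself is null and `v ∅ = 0`, the worth of `C` equals the total worth of the merged components.
-/

namespace TUGame

section Graph

variable {ι : Type*} {G : SimpleGraph ι}

theorem restrict_mono {R S : Finset ι} (h : R ⊆ S) : restrict G R ≤ restrict G S :=
  fun _ _ hab => ⟨hab.1, h hab.2.1, h hab.2.2⟩

theorem mem_of_reachable_restrict {S : Finset ι} {a b : ι} (h : (restrict G S).Reachable a b)
    (ha : a ∈ S) : b ∈ S := by
  obtain ⟨p⟩ := h.symm
  cases p with
  | nil => exact ha
  | cons hadj _ => exact hadj.2.1

theorem reachable_restrict_of_forall_mem_support {S W : Finset ι} {a b : ι}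
    (p : (restrict G S).Walk a b) (h : ∀ x ∈ p.support, x ∈ W) : (restrict G W).Reachable a b := by
  induction p with
  | nil => rfl
  | cons hadj q ih =>
    have hq : ∀ x ∈ q.support, x ∈ W := fun x hx => h x (List.mem_cons_of_mem _ hx)
    have hadj' : (restrict G W).Adj _ _ := ⟨hadj.1, h _ List.mem_cons_self, hq _ q.start_mem_support⟩
    exact hadj'.reachable.trans (ih hq)

theorem exists_minimalConnecting_subset {T W : Finset ι} (hTW : T ⊆ W) (hW : ConnectedOn G W) :
    ∃ R ⊆ W, MinimalConnecting G T R := by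
  induction W using Finset.strongInduction with
  | H W ih =>
    by_cases h : ∃ R' ⊂ W, T ⊆ R' ∧ ConnectedOn G R'
    · obtain ⟨R', hR'W, hTR', hR'⟩ := h
      obtain ⟨R, hRR', hR⟩ := ih R' hR'W hTR' hR'
      exact ⟨R, hRR'.trans hR'W.subset, hR⟩
    · exact ⟨W, subset_rfl, hTW, hW, fun R' hR' hTR' => h ⟨R', hR', hTR'⟩⟩

variable [Fintype ι] [DecidableEq ι] {S A : Finset ι} {i j k : ι}

theorem mem_comp : j ∈ comp G S i ↔ j ∈ S ∧ (restrict G S).Reachable i j :=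
  mem_filter

theorem comp_subset : comp G S i ⊆ S :=
  filter_subset _ _

theorem mem_comp_self (h : i ∈ S) : i ∈ comp G S i :=
  mem_comp.2 ⟨h, .rfl⟩

theorem mem_comp_comm : j ∈ comp G S i ↔ i ∈ comp G S j := by
  simp only [mem_comp]
  exact ⟨fun ⟨hj, h⟩ => ⟨mem_of_reachable_restrict h.symm hj, h.symm⟩,
    fun ⟨hi, h⟩ => ⟨mem_of_reachable_restrict h.symm hi, h.symm⟩⟩

theorem comp_eq_of_mem (h : j ∈ comp G S i) : comp G S j = comp G S i := by
  ext x
  simp only [mem_comp]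
  have hij := (mem_comp.1 h).2
  exact and_congr_right fun _ => ⟨hij.trans, hij.symm.trans⟩

theorem comp_mono (h : S ⊆ A) : comp G S i ⊆ comp G A i := fun _ hx =>
  mem_comp.2 ⟨h (mem_comp.1 hx).1, (mem_comp.1 hx).2.mono (restrict_mono h)⟩

theorem forall_mem_support_mem_comp (p : (restrict G S).Walk i j) (hi : i ∈ S) :
    ∀ x ∈ p.support, x ∈ comp G S i := fun x hx =>
  have hx := (p.takeUntil x hx).reachable
  mem_comp.2 ⟨mem_of_reachable_restrict hx hi, hx⟩

theorem connectedOn_comp : ConnectedOn G (comp G S i) := by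
  have reach_of_mem : ∀ x ∈ comp G S i, (restrict G (comp G S i)).Reachable i x := by
    intro x hx
    obtain ⟨hxS, ⟨p⟩⟩ := mem_comp.1 hx
    exact reachable_restrict_of_forall_mem_support p
      (forall_mem_support_mem_comp p (mem_of_reachable_restrict p.reachable.symm hxS))
  intro x hx y hy
  exact (reach_of_mem x hx).symm.trans (reach_of_mem y hy)

theorem comp_eq_of_comp_subset (hSA : S ⊆ A) (h : comp G A i ⊆ S) : comp G S i = comp G A i := by
  refine (comp_mono hSA).antisymm fun y hy => ?_
  obtain ⟨hyA, ⟨p⟩⟩ := mem_comp.1 hy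
  have hiA : i ∈ A := mem_of_reachable_restrict p.reachable.symm hyA
  exact mem_comp.2 ⟨h hy, reachable_restrict_of_forall_mem_support p
    fun x hx => h (forall_mem_support_mem_comp p hiA x hx)⟩

theorem comp_eq_comp_insert (hj : j ∉ comp G (insert i S) i) :
    comp G S j = comp G (insert i S) j := by
  refine comp_eq_of_comp_subset (subset_insert i S) fun x hx => ?_
  rcases mem_insert.1 (comp_subset hx) with rfl | hxS
  · exact absurd (mem_comp_comm.1 hx) hj
  · exact hxS

theorem image_comp_insert :
    (insert i S).image (comp G (insert i S)) =
      insert (comp G (insert i S) i)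
        ((S.image (comp G S)).filter fun D => ¬ D ⊆ comp G (insert i S) i) := by
  ext D
  simp only [mem_image, mem_filter, mem_insert (s := (S.image (comp G S)).filter _)]
  constructor
  · rintro ⟨x, hx, rfl⟩
    obtain rfl | hxS := mem_insert.1 hx
    · exact .inl rfl
    by_cases hxC : x ∈ comp G (insert i S) i
    · exact .inl (comp_eq_of_mem hxC)
    · rw [← comp_eq_comp_insert hxC]
      exact .inr ⟨⟨x, hxS, rfl⟩, fun h => hxC (h (mem_comp_self hxS))⟩
  · rintro (rfl | ⟨⟨x, hxS, rfl⟩, hxC⟩)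
    · exact ⟨i, mem_insert_self i S, rfl⟩
    have hx : x ∉ comp G (insert i S) i := fun hx =>
      hxC ((comp_mono (subset_insert i S)).trans (comp_eq_of_mem hx).le)
    exact ⟨x, mem_insert_of_mem hxS, (comp_eq_comp_insert hx).symm⟩

theorem intermediary_of_reachable_insert (hj : j ∈ S) (hk : k ∈ S) (hiS : i ∉ S)
    (hA : (restrict G (insert i S)).Reachable j k) (hS : ¬ (restrict G S).Reachable j k) :
    Intermediary G {j, k} i := by
  have hjk : {j, k} ⊆ comp G (insert i S) j := by
    rw [insert_subset_iff, singleton_subset_iff]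
    exact ⟨mem_comp_self (mem_insert_of_mem hj), mem_comp.2 ⟨mem_insert_of_mem hk, hA⟩⟩
  obtain ⟨R, hRC, hR⟩ := exists_minimalConnecting_subset hjk connectedOn_comp
  refine ⟨R, hR, ?_, ?_⟩
  · by_contra hiR
    have hRS : R ⊆ S := fun x hx =>
      (mem_insert.1 (comp_subset (hRC hx))).resolve_left (ne_of_mem_of_not_mem hx hiR)
    exact hS ((hR.2.1 j (hR.1 (by simp)) k (hR.1 (by simp))).mono (restrict_mono hRS))
  · simp only [mem_insert, mem_singleton, not_or]
    exact ⟨ne_of_mem_of_not_mem hj hiS |>.symm, ne_of_mem_of_not_mem hk hiS |>.symm⟩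

end Graph

section Game

variable {ι : Type*} [DecidableEq ι] {v : Finset ι → ℝ}

theorem apply_union_of_forall_nullPlayer {B : Finset ι} (hB : ∀ b ∈ B, NullPlayer v b)
    (T : Finset ι) : v (T ∪ B) = v T := by
  induction B using Finset.induction_on with
  | empty => rw [union_empty]
  | insert b B _ ih =>
    have hB' : ∀ x ∈ B, NullPlayer v x := fun x hx => hB x (mem_insert_of_mem hx)
    rw [union_insert, ← ih hB']
    by_cases hb : b ∈ T ∪ B
    · rw [insert_eq_of_mem hb]
    · exact hB b (mem_insert_self b B) _ hb

theorem apply_eq_zero_of_forall_nullPlayer (hv : v ∅ = 0) {B : Finset ι}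
    (hB : ∀ b ∈ B, NullPlayer v b) : v B = 0 := by
  simpa [hv] using apply_union_of_forall_nullPlayer hB ∅

theorem apply_eq_sum_of_nonNull_within_one (hv : v ∅ = 0) {C : Finset ι}
    {𝒟 : Finset (Finset ι)} (hsub : ∀ D ∈ 𝒟, D ⊆ C)
    (hcover : ∀ x ∈ C, ¬ NullPlayer v x → ∃ D ∈ 𝒟, x ∈ D)
    (hone : ∀ D ∈ 𝒟, ∀ D' ∈ 𝒟, D ≠ D' → ∀ x ∈ D, ∀ y ∈ D', NullPlayer v x ∨ NullPlayer v y) :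
    v C = ∑ D ∈ 𝒟, v D := by
  by_cases h : ∃ D₀ ∈ 𝒟, ∃ x₀ ∈ D₀, ¬ NullPlayer v x₀
  · obtain ⟨D₀, hD₀, x₀, hx₀, hx₀null⟩ := h
    have null_of_ne : ∀ D ∈ 𝒟, D ≠ D₀ → ∀ y ∈ D, NullPlayer v y := fun D hD hne y hy =>
      (hone D hD D₀ hD₀ hne y hy x₀ hx₀).resolve_right hx₀null
    have hrest : ∀ y ∈ C \ D₀, NullPlayer v y := by
      intro y hy
      by_contra hy'
      obtain ⟨D, hD, hyD⟩ := hcover y (mem_sdiff.1 hy).1 hy'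
      exact hy' (null_of_ne D hD (fun h => (mem_sdiff.1 hy).2 (h ▸ hyD)) y hyD)
    rw [sum_eq_single_of_mem D₀ hD₀ fun D hD hne =>
        apply_eq_zero_of_forall_nullPlayer hv (null_of_ne D hD hne),
      ← apply_union_of_forall_nullPlayer hrest D₀, union_sdiff_of_subset (hsub D₀ hD₀)]
  · push Not at h
    rw [apply_eq_zero_of_forall_nullPlayer hv fun x hx => by
      by_contra hx'
      obtain ⟨D, hD, hxD⟩ := hcover x hx hx'
      exact hx' (h D hD x hxD)]
    exact (sum_eq_zero fun D hD => apply_eq_zero_of_forall_nullPlayer hv (h D hD)).symm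

end Game

section RestrictedGame

variable {ι : Type*} [Fintype ι] [DecidableEq ι] {G : SimpleGraph ι} {v : Finset ι → ℝ}
  {S : Finset ι} {i : ι}

theorem restrictedGame_insert_eq (hv : v ∅ = 0) (hi : NullPlayer v i) (hiS : i ∉ S)
    (hsep : ∀ j ∈ S, ∀ k ∈ S, (restrict G (insert i S)).Reachable j k →
      ¬ (restrict G S).Reachable j k → NullPlayer v j ∨ NullPlayer v k) :
    restrictedGame G v (insert i S) = restrictedGame G v S := by
  set C := comp G (insert i S) i
  rw [restrictedGame, restrictedGame, image_comp_insert, sum_insert (by simp),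
    ← sum_filter_add_sum_filter_not (S.image (comp G S)) (· ⊆ C)]
  congr 1
  refine apply_eq_sum_of_nonNull_within_one hv (fun D hD => (mem_filter.1 hD).2) ?_ ?_
  · intro x hxC hx
    have hxS : x ∈ S := (mem_insert.1 (comp_subset hxC)).resolve_left (by rintro rfl; exact hx hi)
    exact ⟨comp G S x, mem_filter.2 ⟨mem_image_of_mem _ hxS,
      (comp_mono (subset_insert i S)).trans (comp_eq_of_mem hxC).le⟩, mem_comp_self hxS⟩
  · simp only [mem_filter, mem_image]
    rintro _ ⟨⟨a, -, rfl⟩, haC⟩ _ ⟨⟨b, -, rfl⟩, hbC⟩ hne x hx y hy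
    have hxS : x ∈ S := comp_subset hx
    have hyS : y ∈ S := comp_subset hy
    refine hsep x hxS y hyS ?_ fun hxy => hne ?_
    · exact (mem_comp.1 (haC hx)).2.symm.trans (mem_comp.1 (hbC hy)).2
    · rw [← comp_eq_of_mem hx, ← comp_eq_of_mem hy, comp_eq_of_mem (mem_comp.2 ⟨hyS, hxy⟩)]

end RestrictedGame

end TUGame

/-- every graph null player is a null player in the
graph-restricted game. -/
theorem graphNull_nullPlayer_restrictedGame {ι : Type*} [Fintype ι] [DecidableEq ι]
    (G : SimpleGraph ι) (v : Finset ι → ℝ) (hv : v ∅ = 0)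
    (i : ι) (h : GraphNull G v i) :
    NullPlayer (restrictedGame G v) i := by
  obtain ⟨hi, hGN⟩ := h
  intro S hiS
  refine restrictedGame_insert_eq hv hi hiS fun j hj k hk hA hS => ?_
  refine hGN j k ?_ ?_ ?_ (intermediary_of_reachable_insert hj hk hiS hA hS)
  · rintro rfl
    exact hS .rfl
  · rintro rfl
    exact hiS hj
  · rintro rfl
    exact hiS hk
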